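/- For every pair of integers n, j with n ≥ 3 and 1 ≤ j ≤ n−2, one has 1/(2n²) ≤ e^{−μ6(n,j)}·(1 + e^{μ6(n,j)}·D6(n,j)) ≤ 2. -/
import Mathlib


noncomputable def mu6 (n j : ℕ) : ℝ :=
  ((n - j).choose 2 : ℝ) * ((n : ℝ) * ((n : ℝ) - 1) * (4 * (n : ℝ) - 5)) /
    (6 * (Nat.choose n 2 : ℝ) ^ 2)

noncomputable def d6 (n j : ℕ) : ℝ :=
  let N : ℝ := (Nat.choose n 2 : ℝ)
  let m : ℝ := ((n - j : ℕ) : ℝ)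
  let U : ℝ := (n : ℝ) * ((n : ℝ) - 1) * (4 * (n : ℝ) - 5) / (6 * N ^ 2)
  let V : ℝ := 4 * (m - 2) * ((n : ℝ) * ((n : ℝ) - 1) * (2 * (n : ℝ) - 1)) / (6 * N ^ 2)
  let W : ℝ := 3 * (m - 2) * (n : ℝ) * ((n : ℝ) - 1) / ((4 * (n : ℝ) - 5) * N)
  let Z : ℝ := 2 * (m - 2) * (2 * (n : ℝ) - 1) * ((n : ℝ) + 1) / ((4 * (n : ℝ) - 5) * N)
  U + 2 * (V + W + Z)

noncomputable def D6 (n j : ℕ) : ℝ :=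
  min (d6 n j) (min (2 * mu6 n j * d6 n j) 1)

lemma mu6_nonneg (n j : ℕ) (hn : 3 ≤ n) : 0 ≤ mu6 n j := by
  have hx : (3 : ℝ) ≤ (n : ℝ) := by exact_mod_cast hn
  unfold mu6
  apply div_nonneg
  · have h1 : (0 : ℝ) ≤ ((n - j).choose 2 : ℝ) := by positivity
    apply mul_nonneg h1
    have a1 : (0:ℝ) ≤ (n:ℝ) := by linarith
    have a2 : (0:ℝ) ≤ (n:ℝ) - 1 := by linarith
    have a3 : (0:ℝ) ≤ 4 * (n:ℝ) - 5 := by linarith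
    exact mul_nonneg (mul_nonneg a1 a2) a3
  · positivity

lemma d6_lower (n j : ℕ) (hn : 3 ≤ n) (hj2 : j ≤ n - 2) :
    1 / (2 * (n : ℝ) ^ 2) ≤ d6 n j := by
  have hx : (3 : ℝ) ≤ (n : ℝ) := by exact_mod_cast hn
  have hm : (2 : ℝ) ≤ ((n - j : ℕ) : ℝ) := by
    have : 2 ≤ n - j := by omega
    exact_mod_cast this
  have hN : (Nat.choose n 2 : ℝ) = (n : ℝ) * ((n : ℝ) - 1) / 2 := by
    rw [Nat.cast_choose_two]
  unfold d6
  simp only [hN]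
  set x : ℝ := (n : ℝ) with hxdef
  set m : ℝ := ((n - j : ℕ) : ℝ) with hmdef
  have hxpos : (0 : ℝ) < x := by linarith
  have hden1 : (0 : ℝ) < 6 * (x * (x - 1) / 2) ^ 2 := by
    have h0 : (0 : ℝ) < x * (x - 1) / 2 := by nlinarith
    nlinarith [pow_pos h0 2]
  have hden2 : (0 : ℝ) < (4 * x - 5) * (x * (x - 1) / 2) := by
    apply mul_pos <;> nlinarith
  have hV : (0 : ℝ) ≤ 4 * (m - 2) * (x * (x - 1) * (2 * x - 1)) / (6 * (x * (x - 1) / 2) ^ 2) := by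
    apply div_nonneg _ (le_of_lt hden1); nlinarith
  have hW : (0 : ℝ) ≤ 3 * (m - 2) * x * (x - 1) / ((4 * x - 5) * (x * (x - 1) / 2)) := by
    apply div_nonneg _ (le_of_lt hden2); nlinarith
  have hZ : (0 : ℝ) ≤ 2 * (m - 2) * (2 * x - 1) * (x + 1) / ((4 * x - 5) * (x * (x - 1) / 2)) := by
    apply div_nonneg _ (le_of_lt hden2); nlinarith
  have hU : 1 / (2 * x ^ 2) ≤ x * (x - 1) * (4 * x - 5) / (6 * (x * (x - 1) / 2) ^ 2) := by
    rw [div_le_div_iff₀ (by positivity) hden1]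
    nlinarith [sq_nonneg x, sq_nonneg (x - 1), sq_nonneg (x * (x - 1))]
  linarith

lemma d6_nonneg (n j : ℕ) (hn : 3 ≤ n) (hj2 : j ≤ n - 2) : 0 ≤ d6 n j := by
  have h := d6_lower n j hn hj2
  have hx : (3 : ℝ) ≤ (n : ℝ) := by exact_mod_cast hn
  have : (0 : ℝ) < 1 / (2 * (n : ℝ) ^ 2) := by positivity
  linarith

theorem stmt_11 (n j : ℕ) (hn : 3 ≤ n) (hj1 : 1 ≤ j) (hj2 : j ≤ n - 2) :
    1 / (2 * (n : ℝ) ^ 2) ≤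
      Real.exp (-(mu6 n j)) * (1 + Real.exp (mu6 n j) * D6 n j) ∧
    Real.exp (-(mu6 n j)) * (1 + Real.exp (mu6 n j) * D6 n j) ≤ 2 := by
  have hx : (3 : ℝ) ≤ (n : ℝ) := by exact_mod_cast hn
  have hmu := mu6_nonneg n j hn
  have hd := d6_nonneg n j hn hj2
  have hdl := d6_lower n j hn hj2
  have key : Real.exp (-(mu6 n j)) * (1 + Real.exp (mu6 n j) * D6 n j)
      = Real.exp (-(mu6 n j)) + D6 n j := by
    rw [mul_add, mul_one, ← mul_assoc, ← Real.exp_add, neg_add_cancel, Real.exp_zero, one_mul]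
  rw [key]
  have hD0 : 0 ≤ D6 n j := by
    unfold D6
    refine le_min hd (le_min ?_ (by norm_num))
    have : 0 ≤ 2 * mu6 n j := by linarith
    exact mul_nonneg this hd
  constructor
  · rcases le_or_gt (mu6 n j) (1 / 2) with h | h
    · have h1 : Real.exp (-(mu6 n j)) ≥ Real.exp (-(1 / 2 : ℝ)) :=
        Real.exp_le_exp.mpr (by linarith)
      have h2 : (1 : ℝ) + (-(1 / 2)) ≤ Real.exp (-(1 / 2 : ℝ)) := by
        have := Real.add_one_le_exp (-(1 / 2 : ℝ)); linarith
      have h3 : 1 / (2 * (n : ℝ) ^ 2) ≤ 1 / 2 := by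
        rw [div_le_div_iff₀ (by positivity) (by norm_num)]
        nlinarith
      linarith
    · have hD : 1 / (2 * (n : ℝ) ^ 2) ≤ D6 n j := by
        unfold D6
        refine le_min hdl (le_min ?_ ?_)
        · calc 1 / (2 * (n : ℝ) ^ 2) ≤ d6 n j := hdl
            _ = 1 * d6 n j := (one_mul _).symm
            _ ≤ 2 * mu6 n j * d6 n j := by
                apply mul_le_mul_of_nonneg_right (by linarith) hd
        · rw [div_le_one (by positivity)]; nlinarith
      have := Real.exp_nonneg (-(mu6 n j))
      linarith
  · have h1 : Real.exp (-(mu6 n j)) ≤ 1 := Real.exp_le_one_iff.mpr (by linarith)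
    have h2 : D6 n j ≤ 1 := le_trans (min_le_right _ _) (min_le_right _ _)
    linarith
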